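/- (Theorem 7, convergence of the iterative scheme) Let C be an initial configuration of the BRP and let opt = f(Fin B) be the minimum number of relocations over feasible move sequences. For L : ℕ, call a partial plan with L relocations any finite sequence of retrievals and relocations starting from C that contains exactly L relocations, and define g(L) = L + (the minimum, over all partial plans with L relocations, of the number of direct blockages in the resulting configuration). Then: (i) for every L ≤ opt, L ≤ g(L) ≤ opt; (ii) g(opt) = opt; (iii) for every L < opt, g(L) > L. Consequently, for any starting value L₀ ≤ opt, the iteration L_{i+1} = g(L_i) produces a strictly increasing sequence until it reaches opt, and it reaches opt after at most opt − L₀ iterations. -/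

import Mathlib

/-- A configuration of the BRP: each stack holds a list of blocks, bottom to top. -/
abbrev Config (B S : ℕ) := Fin S → List (Fin B)

/-- Every block occurs exactly once among the stacks. -/
def IsConfig {B S : ℕ} (C : Config B S) : Prop :=
  ∀ b : Fin B, (∑ s : Fin S, (C s).count b) = 1

/-- `a` lies strictly below `b` in stack `s` of `C`. -/
def StrictlyBelow {B S : ℕ} (C : Config B S) (s : Fin S) (a b : Fin B) : Prop :=
  ∃ i j : ℕ, i < j ∧ (C s)[i]? = some a ∧ (C s)[j]? = some b

/-- A block is badly placed if some smaller-labelled block lies below it in its stack. -/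
def BadlyPlaced {B S : ℕ} (C : Config B S) (b : Fin B) : Prop :=
  ∃ s a, a < b ∧ StrictlyBelow C s a b

/-- Moves: retrieve the top block of a stack, or relocate the top block of one
stack onto another stack. -/
inductive Move (S : ℕ) where
  | retrieve (s : Fin S)
  | relocate (src dst : Fin S)

def applyMove {B S : ℕ} (C : Config B S) : Move S → Config B S
  | .retrieve s => Function.update C s (C s).dropLast
  | .relocate src dst =>
    match (C src).getLast? with
    | some b =>
      let C' := Function.update C src (C src).dropLast
      Function.update C' dst (C' dst ++ [b])
    | none => C

def Enabled {B S : ℕ} (C : Config B S) : Move S → Prop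
  | .retrieve s => ∃ b, (C s).getLast? = some b ∧ ∀ (s' : Fin S), ∀ b' ∈ C s', b ≤ b'
  | .relocate src dst => src ≠ dst ∧ C src ≠ []

def play {B S : ℕ} (C : Config B S) : List (Move S) → Config B S
  | [] => C
  | m :: ms => play (applyMove C m) ms

def AllEnabled {B S : ℕ} (C : Config B S) : List (Move S) → Prop
  | [] => True
  | m :: ms => Enabled C m ∧ AllEnabled (applyMove C m) ms

/-- A feasible move sequence: every move is enabled and at the end all blocks
have been retrieved. -/
def Feasible {B S : ℕ} (C : Config B S) (ms : List (Move S)) : Prop :=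
  AllEnabled C ms ∧ ∀ s, play C ms s = []

/-- `b` is the block moved by `m` (a relocation) performed in configuration `C`. -/
def MovedBlock {B S : ℕ} (C : Config B S) (m : Move S) (b : Fin B) : Prop :=
  ∃ src dst, m = .relocate src dst ∧ src ≠ dst ∧ (C src).getLast? = some b

/-- The four types of relocation moves. -/
inductive MType where
  | BB | BG | GB | GG

/-- The relocation `m`, moving block `b` from configuration `C`, has the given type. -/
def MTypeOf {B S : ℕ} (C : Config B S) (m : Move S) (b : Fin B) : MType → Prop
  | .BB => BadlyPlaced C b ∧ BadlyPlaced (applyMove C m) b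
  | .BG => BadlyPlaced C b ∧ ¬ BadlyPlaced (applyMove C m) b
  | .GB => ¬ BadlyPlaced C b ∧ BadlyPlaced (applyMove C m) b
  | .GG => ¬ BadlyPlaced C b ∧ ¬ BadlyPlaced (applyMove C m) b

/-- `m` is a relocation of a block of `𝔅`. -/
def RelocIn {B S : ℕ} (𝔅 : Set (Fin B)) (C : Config B S) (m : Move S) : Prop :=
  ∃ b ∈ 𝔅, MovedBlock C m b

/-- `m` is a relocation of a block of `𝔅` of type `mt`. -/
def RelocTypeIn {B S : ℕ} (mt : MType) (𝔅 : Set (Fin B)) (C : Config B S) (m : Move S) : Prop :=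
  ∃ b ∈ 𝔅, MovedBlock C m b ∧ MTypeOf C m b mt

/-- `m` is a non-BG relocation of a block of `𝔅`. -/
def RelocNonBGIn {B S : ℕ} (𝔅 : Set (Fin B)) (C : Config B S) (m : Move S) : Prop :=
  ∃ b ∈ 𝔅, MovedBlock C m b ∧ ¬ MTypeOf C m b MType.BG

/-- Count the moves of a sequence satisfying `P` (evaluated in the configuration
in which each move is performed). -/
noncomputable def countMoves {B S : ℕ} (P : Config B S → Move S → Prop) :
    Config B S → List (Move S) → ℕ
  | _, [] => 0
  | C, m :: ms =>
    (@ite ℕ (P C m) (Classical.propDecidable _) 1 0) + countMoves P (applyMove C m) ms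

/-- Minimum over feasible move sequences of the number of moves satisfying `P`. -/
noncomputable def fMin {B S : ℕ} (C : Config B S) (P : Config B S → Move S → Prop) : ℕ :=
  sInf { n | ∃ ms, Feasible C ms ∧ countMoves P C ms = n }

/-- `f(𝔅)`: least number of relocations applied to blocks of `𝔅`. -/
noncomputable def fRel {B S : ℕ} (C : Config B S) (𝔅 : Set (Fin B)) : ℕ :=
  fMin C (RelocIn 𝔅)

/-- `f_mt(𝔅)`: least number of type-`mt` relocations applied to blocks of `𝔅`. -/
noncomputable def fTyp {B S : ℕ} (C : Config B S) (mt : MType) (𝔅 : Set (Fin B)) : ℕ :=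
  fMin C (RelocTypeIn mt 𝔅)

/-- `f_nonBG(𝔅)`: least number of non-BG relocations applied to blocks of `𝔅`. -/
noncomputable def fNonBG {B S : ℕ} (C : Config B S) (𝔅 : Set (Fin B)) : ℕ :=
  fMin C (RelocNonBGIn 𝔅)

/-- The top 1st layer: the topmost block of each stack. -/
def TopLayer {B S : ℕ} (C : Config B S) : Set (Fin B) :=
  {b | ∃ s, (C s).getLast? = some b}

/-- The top `k` layers: the topmost `k` blocks of every stack. -/
def TopK {B S : ℕ} (C : Config B S) (k : ℕ) : Set (Fin B) :=
  {b | ∃ s, b ∈ (C s).drop ((C s).length - k)}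

/-- The top `j`-th layer: the `j`-th block from the top of every stack. -/
def TopJth {B S : ℕ} (C : Config B S) (j : ℕ) : Set (Fin B) :=
  {b | ∃ s, (C s)[(C s).length - j]? = some b}

/-- A virtual layer: a set of blocks containing exactly one block from each stack. -/
def VirtualLayer {B S : ℕ} (C : Config B S) (V : Set (Fin B)) : Prop :=
  ∀ s : Fin S, ∃! b : Fin B, b ∈ V ∧ b ∈ C s

/-- `a` lies at or below the `V`-block of stack `s`. -/
def AtOrBelowLayer {B S : ℕ} (C : Config B S) (V : Set (Fin B)) (s : Fin S) (a : Fin B) : Prop :=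
  ∃ b j, b ∈ V ∧ (C s)[j]? = some b ∧ a ∈ (C s).take (j + 1)

/-- `V` is a virtual layer satisfying the conditions of Property 5:
(1) in some stack, a block strictly below the `V`-block of that stack has a smaller
label than every block of `V`; (2) every badly placed block of `V` has a label
strictly greater than the minimum label present in stack `s` after deleting all
blocks strictly above the `V`-block of `s`, for every stack `s`. -/
def P5 {B S : ℕ} (C : Config B S) (V : Set (Fin B)) : Prop :=
  VirtualLayer C V ∧
  (∃ s a b, b ∈ V ∧ StrictlyBelow C s a b ∧ ∀ c ∈ V, a < c) ∧
  (∀ b ∈ V, BadlyPlaced C b → ∀ s : Fin S, ∃ a, AtOrBelowLayer C V s a ∧ a < b)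

/-- A pair of virtual layers `V₁` (upper), `V₂` (lower) with shared well-placed
block `bstar` satisfying the conditions of Property 7. -/
def P7 {B S : ℕ} (C : Config B S) (V₁ V₂ : Set (Fin B)) (bstar : Fin B) : Prop :=
  V₁ ∩ V₂ = {bstar} ∧
  ¬ BadlyPlaced C bstar ∧
  (∀ s : Fin S, bstar ∉ C s →
    ∃ b₁ b₂, b₁ ∈ V₁ ∧ b₂ ∈ V₂ ∧ StrictlyBelow C s b₂ b₁) ∧
  P5 C V₁ ∧ P5 C V₂ ∧
  (∀ s : Fin S, ∃ a, AtOrBelowLayer C V₁ s a ∧ a ≤ bstar) ∧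
  (∃ s : Fin S, ∀ a, AtOrBelowLayer C V₁ s a → bstar ≤ a)

/-- Push blocks one by one onto the indicated stacks. -/
def pushAll {B S : ℕ} (C : Config B S) : List (Fin B × Fin S) → Config B S
  | [] => C
  | p :: rest => pushAll (Function.update C p.2 (C p.2 ++ [p.1])) rest

/-- The blocks lying strictly above position `i` of stack `s`, listed from the
top of the stack downward (the processing order of the experiment). -/
def aboveList {B S : ℕ} (C : Config B S) (s : Fin S) (i : ℕ) : List (Fin B) :=
  ((C s).drop (i + 1)).reverse

/-- The arrangement resulting from the experiment of Property 4: the blocks above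
position `i` of stack `s` are relocated exactly once, from the top downward, onto
the stacks listed in `ds`. -/
def expResult {B S : ℕ} (C : Config B S) (s : Fin S) (i : ℕ) (ds : List (Fin S)) :
    Config B S :=
  pushAll (Function.update C s ((C s).take (i + 1))) ((aboveList C s i).zip ds)

/-- The condition of Property 4 (target block at position `i` of stack `sStar`):
in every experiment, some relocated block ends badly placed. -/
def P4Cond {B S : ℕ} (C : Config B S) (sStar : Fin S) (i : ℕ) : Prop :=
  ∀ ds : List (Fin S), ds.length = (aboveList C sStar i).length →
    (∀ d ∈ ds, d ≠ sStar) →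
    ∃ b ∈ aboveList C sStar i, BadlyPlaced (expResult C sStar i ds) b

/-- The set `𝔅⁴`: the blocks above the target block together with, for each
nonempty stack other than the target's stack, its block of minimum label. -/
def B4Set {B S : ℕ} (C : Config B S) (sStar : Fin S) (i : ℕ) : Set (Fin B) :=
  {b | b ∈ aboveList C sStar i} ∪
  {b | ∃ s, s ≠ sStar ∧ b ∈ C s ∧ ∀ b' ∈ C s, b ≤ b'}

/-- The number of direct blockages: adjacent pairs in a stack whose upper block
has a strictly larger label. -/
def directBlockages {B S : ℕ} (C : Config B S) : ℕ :=
  ∑ s : Fin S, (((C s).zip (C s).tail).filter (fun p => decide (p.1 < p.2))).length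

/-- The number of relocations in a move sequence. -/
def relocCount {S : ℕ} (ms : List (Move S)) : ℕ :=
  (ms.filter (fun m => match m with | Move.relocate _ _ => true | Move.retrieve _ => false)).length

/-- The minimum number of relocations over all feasible move sequences. -/
noncomputable def fAll {B S : ℕ} (C : Config B S) : ℕ :=
  sInf { n | ∃ ms, Feasible C ms ∧ relocCount ms = n }

/-- `g(L)`: `L` plus the minimum number of direct blockages over all partial
plans with exactly `L` relocations. -/
noncomputable def gIter {B S : ℕ} (C : Config B S) (L : ℕ) : ℕ :=
  L + sInf { d | ∃ ms : List (Move S), AllEnabled C ms ∧ relocCount ms = L ∧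
      d = directBlockages (play C ms) }

/-!
A retrieval takes the smallest block, which then lies on top of its stack, so it leaves
the direct blockages unchanged, and a relocation removes at most one of them. Hence a
configuration with `d` direct blockages needs at least `d` further relocations, and cutting
an optimal plan after `L ≤ opt` relocations gives `g(L) ≤ opt`. Conversely, stacks without
direct blockages are non-increasing from bottom to top, so such a configuration is emptied
by retrievals alone; a partial plan with `L < opt` relocations can therefore not end without
blockages, i.e. `g(L) > L`. Since `g` maps `[0, opt]` into itself, fixes `opt` and moves
every smaller value strictly up, its iterates reach `opt` within `opt - L₀` steps.
-/

lemma List.zip_tail_append_pair {α : Type*} (l : List α) (a b : α) :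
    (l ++ [a, b]).zip (l ++ [a, b]).tail = (l ++ [a]).zip (l ++ [a]).tail ++ [(a, b)] := by
  induction l with
  | nil => rfl
  | cons c l ih =>
    cases l with
    | nil => rfl
    | cons d l => simpa using ih

section AscentCount

variable {α : Type*} [LinearOrder α]

def ascentCount (l : List α) : ℕ :=
  ((l.zip l.tail).filter fun p => decide (p.1 < p.2)).length

@[simp] lemma ascentCount_nil : ascentCount ([] : List α) = 0 := rfl

@[simp] lemma ascentCount_singleton (a : α) : ascentCount [a] = 0 := rfl

lemma ascentCount_append_pair (l : List α) (a b : α) :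
    ascentCount (l ++ [a, b]) = ascentCount (l ++ [a]) + if a < b then 1 else 0 := by
  unfold ascentCount
  rw [List.zip_tail_append_pair, List.filter_append, List.length_append]
  split_ifs with h <;> simp [h]

lemma ascentCount_le_append_singleton (l : List α) (b : α) :
    ascentCount l ≤ ascentCount (l ++ [b]) := by
  rcases l.eq_nil_or_concat' with rfl | ⟨l, a, rfl⟩
  · simp
  · simp only [List.append_assoc, List.singleton_append, ascentCount_append_pair]
    omega

lemma ascentCount_append_singleton_le (l : List α) (b : α) :
    ascentCount (l ++ [b]) ≤ ascentCount l + 1 := by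
  rcases l.eq_nil_or_concat' with rfl | ⟨l, a, rfl⟩
  · simp
  · simp only [List.append_assoc, List.singleton_append, ascentCount_append_pair]
    split_ifs <;> omega

lemma ascentCount_append_singleton_of_le {l : List α} {b : α} (h : ∀ x ∈ l, b ≤ x) :
    ascentCount (l ++ [b]) = ascentCount l := by
  rcases l.eq_nil_or_concat' with rfl | ⟨l, a, rfl⟩
  · simp
  · simp only [List.append_assoc, List.singleton_append, ascentCount_append_pair]
    simp [(h a (by simp)).not_gt]

lemma getLast_le_of_ascentCount_eq_zero {l : List α} (h : ascentCount l = 0) {y : α}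
    (hy : l.getLast? = some y) : ∀ x ∈ l, y ≤ x := by
  induction l using List.reverseRecOn generalizing y with
  | nil => simp at hy
  | append_singleton l b ih =>
    obtain rfl : b = y := by simpa using hy
    rcases l.eq_nil_or_concat' with rfl | ⟨l, a, rfl⟩
    · simp
    have hpair := ascentCount_append_pair l a b
    simp only [List.append_assoc, List.singleton_append] at h
    rw [h] at hpair
    have hba : b ≤ a := by
      by_contra hab
      simp [not_le.1 hab] at hpair
    have hl : ∀ x ∈ l ++ [a], a ≤ x := ih (by omega) (by simp)
    intro x hx
    rcases List.mem_append.1 hx with hx | hx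
    · exact hba.trans (hl x hx)
    · simp at hx; exact hx ▸ le_rfl

lemma Finset.sum_comp_update_add {ι β M : Type*} [Fintype ι] [DecidableEq ι] [AddCommMonoid M]
    (g : β → M) (f : ι → β) (i : ι) (b : β) :
    ∑ j, g (Function.update f i b j) + g (f i) = ∑ j, g (f j) + g b := by
  simp only [Function.apply_update (fun _ => g), Finset.sum_update_of_mem (Finset.mem_univ i),
    Finset.sum_eq_add_sum_sdiff_singleton_of_mem (Finset.mem_univ i) (fun j => g (f j))]
  abel

section Configurations

variable {B S : ℕ}

def numBlocks (C : Config B S) : ℕ := ∑ s, (C s).length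

lemma directBlockages_eq_sum_ascentCount (C : Config B S) :
    directBlockages C = ∑ s, ascentCount (C s) := rfl

lemma directBlockages_update_add (C : Config B S) (s : Fin S) (l : List (Fin B)) :
    directBlockages (Function.update C s l) + ascentCount (C s) =
      directBlockages C + ascentCount l :=
  Finset.sum_comp_update_add ascentCount C s l

lemma numBlocks_update_add (C : Config B S) (s : Fin S) (l : List (Fin B)) :
    numBlocks (Function.update C s l) + (C s).length = numBlocks C + l.length :=
  Finset.sum_comp_update_add List.length C s l

lemma applyMove_retrieve (C : Config B S) (s : Fin S) :
    applyMove C (.retrieve s) = Function.update C s (C s).dropLast := rfl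

lemma applyMove_relocate_of_getLast? {C : Config B S} {src : Fin S} {b : Fin B}
    (h : (C src).getLast? = some b) (dst : Fin S) :
    applyMove C (.relocate src dst) =
      Function.update (Function.update C src (C src).dropLast) dst
        (Function.update C src (C src).dropLast dst ++ [b]) := by
  simp [applyMove, h]

lemma exists_mem_of_mem_applyMove {C : Config B S} {m : Move S} {s : Fin S} {x : Fin B}
    (hx : x ∈ applyMove C m s) : ∃ s', x ∈ C s' := by
  have mem_update_dropLast :
      ∀ {s'}, x ∈ Function.update C s' (C s').dropLast s → ∃ s', x ∈ C s' := by
    intro s' hx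
    rcases eq_or_ne s s' with rfl | hne
    · exact ⟨s, List.dropLast_subset _ (by simpa using hx)⟩
    · exact ⟨s, by simpa [hne] using hx⟩
  cases m with
  | retrieve s' => exact mem_update_dropLast hx
  | relocate src dst =>
    rcases h : (C src).getLast? with _ | b
    · simp only [applyMove, h] at hx
      exact ⟨s, hx⟩
    rw [applyMove_relocate_of_getLast? h] at hx
    rcases eq_or_ne s dst with rfl | hne
    · rcases List.mem_append.1 (by simpa only [Function.update_self] using hx) with hx | hx
      · exact mem_update_dropLast hx
      · exact ⟨src, List.eq_of_mem_singleton hx ▸ List.mem_of_mem_getLast? h⟩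
    · exact mem_update_dropLast (by simpa [hne] using hx)

end Configurations

section Plans

variable {B S : ℕ}

lemma play_append (C : Config B S) (p q : List (Move S)) :
    play C (p ++ q) = play (play C p) q := by
  induction p generalizing C with
  | nil => rfl
  | cons m p ih => exact ih (applyMove C m)

lemma allEnabled_append (C : Config B S) (p q : List (Move S)) :
    AllEnabled C (p ++ q) ↔ AllEnabled C p ∧ AllEnabled (play C p) q := by
  induction p generalizing C with
  | nil => simp [AllEnabled, play]
  | cons m p ih => simp only [List.cons_append, AllEnabled, ih, play, and_assoc]

lemma feasible_append (C : Config B S) (p q : List (Move S)) :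
    Feasible C (p ++ q) ↔ AllEnabled C p ∧ Feasible (play C p) q := by
  simp only [Feasible, allEnabled_append, play_append, and_assoc]

@[simp] lemma relocCount_nil : relocCount ([] : List (Move S)) = 0 := rfl

@[simp] lemma relocCount_cons_retrieve (s : Fin S) (ms : List (Move S)) :
    relocCount (.retrieve s :: ms) = relocCount ms := by
  simp [relocCount]

@[simp] lemma relocCount_cons_relocate (src dst : Fin S) (ms : List (Move S)) :
    relocCount (.relocate src dst :: ms) = relocCount ms + 1 := by
  simp [relocCount, Nat.add_comm]

lemma relocCount_append (p q : List (Move S)) :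
    relocCount (p ++ q) = relocCount p + relocCount q := by
  simp [relocCount]

lemma exists_append_relocCount_eq {L : ℕ} (ms : List (Move S)) (hL : L ≤ relocCount ms) :
    ∃ p q, ms = p ++ q ∧ relocCount p = L := by
  induction ms generalizing L with
  | nil => exact ⟨[], [], rfl, by simp at hL; simp [hL]⟩
  | cons m ms ih =>
    rcases Nat.eq_zero_or_pos L with rfl | hpos
    · exact ⟨[], m :: ms, rfl, rfl⟩
    cases m with
    | retrieve s =>
      obtain ⟨p, q, rfl, hp⟩ := ih (by simpa using hL)
      exact ⟨.retrieve s :: p, q, rfl, by simpa using hp⟩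
    | relocate src dst =>
      obtain ⟨p, q, rfl, hp⟩ := ih (L := L - 1) (by simp at hL; omega)
      exact ⟨.relocate src dst :: p, q, rfl, by simp [hp]; omega⟩

lemma fAll_le {C : Config B S} {ms : List (Move S)} (h : Feasible C ms) :
    fAll C ≤ relocCount ms :=
  Nat.sInf_le ⟨ms, h, rfl⟩

lemma exists_feasible_relocCount_eq_fAll {C : Config B S} (h : ∃ ms, Feasible C ms) :
    ∃ ms, Feasible C ms ∧ relocCount ms = fAll C := by
  obtain ⟨ms, hms⟩ := h
  exact Nat.sInf_mem (s := {n | ∃ ms, Feasible C ms ∧ relocCount ms = n}) ⟨_, ms, hms, rfl⟩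

end Plans

section Blockages

variable {B S : ℕ}

lemma exists_le_all_blocks {C : Config B S} {s₁ : Fin S} (h : C s₁ ≠ []) :
    ∃ s b, b ∈ C s ∧ ∀ s', ∀ x ∈ C s', b ≤ x := by
  classical
  have hne : (Finset.univ.biUnion fun s => (C s).toFinset).Nonempty := by
    obtain ⟨x, hx⟩ := List.exists_mem_of_ne_nil _ h
    exact ⟨x, by simpa using ⟨s₁, hx⟩⟩
  obtain ⟨b, hb, hmin⟩ := Finset.exists_min_image _ id hne
  obtain ⟨s, hs⟩ : ∃ s, b ∈ C s := by simpa using hb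
  exact ⟨s, b, hs, fun s' x hx => hmin x (by simpa using ⟨s', hx⟩)⟩

lemma numBlocks_applyMove_retrieve_lt {C : Config B S} {s : Fin S} (h : C s ≠ []) :
    numBlocks (applyMove C (.retrieve s)) < numBlocks C := by
  have := numBlocks_update_add C s (C s).dropLast
  have := List.length_pos_iff.2 h
  rw [applyMove_retrieve]
  simp only [List.length_dropLast] at *
  omega

lemma numBlocks_applyMove_relocate {C : Config B S} {src dst : Fin S} (h : src ≠ dst) :
    numBlocks (applyMove C (.relocate src dst)) = numBlocks C := by
  rcases htop : (C src).getLast? with _ | b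
  · simp [applyMove, htop]
  obtain ⟨l, hl⟩ := List.getLast?_eq_some_iff.1 htop
  have h₁ := numBlocks_update_add C src l
  have h₂ := numBlocks_update_add (Function.update C src l) dst
    (Function.update C src l dst ++ [b])
  rw [applyMove_relocate_of_getLast? htop, hl, List.dropLast_concat]
  simp only [Function.update_of_ne h.symm, hl, List.length_append, List.length_singleton] at *
  omega

lemma directBlockages_applyMove_retrieve {C : Config B S} {s : Fin S}
    (h : Enabled C (.retrieve s)) :
    directBlockages (applyMove C (.retrieve s)) = directBlockages C := by
  obtain ⟨b, htop, hmin⟩ := h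
  obtain ⟨l, hl⟩ := List.getLast?_eq_some_iff.1 htop
  have hupd := directBlockages_update_add C s l
  have hasc : ascentCount (l ++ [b]) = ascentCount l :=
    ascentCount_append_singleton_of_le fun x hx => hmin s x (by simp [hl, hx])
  rw [applyMove_retrieve, hl, List.dropLast_concat]
  rw [hl] at hupd
  omega

lemma directBlockages_le_applyMove_relocate_add_one (C : Config B S) (src dst : Fin S) :
    directBlockages C ≤ directBlockages (applyMove C (.relocate src dst)) + 1 := by
  rcases htop : (C src).getLast? with _ | b
  · simp [applyMove, htop]
  obtain ⟨l, hl⟩ := List.getLast?_eq_some_iff.1 htop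
  have h₁ := directBlockages_update_add C src l
  have h₂ := directBlockages_update_add (Function.update C src l) dst
    (Function.update C src l dst ++ [b])
  have h₃ := ascentCount_append_singleton_le l b
  have h₄ := ascentCount_le_append_singleton (Function.update C src l dst) b
  rw [applyMove_relocate_of_getLast? htop, hl, List.dropLast_concat]
  rw [hl] at h₁
  omega

lemma directBlockages_le_relocCount {C : Config B S} {ms : List (Move S)}
    (h : Feasible C ms) : directBlockages C ≤ relocCount ms := by
  induction ms generalizing C with
  | nil => simp [directBlockages_eq_sum_ascentCount, show ∀ s, C s = [] from h.2]
  | cons m ms ih =>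
    have hrest := ih ⟨h.1.2, h.2⟩
    cases m with
    | retrieve s =>
      rw [directBlockages_applyMove_retrieve h.1.1] at hrest
      simpa using hrest
    | relocate src dst =>
      have := directBlockages_le_applyMove_relocate_add_one C src dst
      simp only [relocCount_cons_relocate]
      omega

lemma exists_enabled_retrieve_of_directBlockages_eq_zero {C : Config B S}
    (h₀ : directBlockages C = 0) {s₁ : Fin S} (hs₁ : C s₁ ≠ []) :
    ∃ s, C s ≠ [] ∧ Enabled C (.retrieve s) := by
  obtain ⟨s, b, hb, hmin⟩ := exists_le_all_blocks hs₁
  have hne : C s ≠ [] := List.ne_nil_of_mem hb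
  obtain ⟨y, hy⟩ := Option.ne_none_iff_exists'.1 (mt List.getLast?_eq_none_iff.1 hne)
  have hasc : ascentCount (C s) = 0 :=
    Finset.sum_eq_zero_iff.1 h₀ s (Finset.mem_univ s)
  have hyb : y ≤ b := getLast_le_of_ascentCount_eq_zero hasc hy b hb
  exact ⟨s, hne, y, hy, fun s' x hx => hyb.trans (hmin s' x hx)⟩

lemma exists_feasible_relocCount_eq_zero_of_directBlockages_eq_zero (C : Config B S)
    (h₀ : directBlockages C = 0) : ∃ ms, Feasible C ms ∧ relocCount ms = 0 := by
  induction hn : numBlocks C using Nat.strong_induction_on generalizing C with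
  | _ n ih =>
  by_cases hempty : ∀ s, C s = []
  · exact ⟨[], ⟨trivial, hempty⟩, rfl⟩
  push Not at hempty
  obtain ⟨s₁, hs₁⟩ := hempty
  obtain ⟨s, hs, hen⟩ := exists_enabled_retrieve_of_directBlockages_eq_zero h₀ hs₁
  obtain ⟨ms, hms, hrel⟩ := ih _ (hn ▸ numBlocks_applyMove_retrieve_lt hs) _
    ((directBlockages_applyMove_retrieve hen).trans h₀) rfl
  exact ⟨.retrieve s :: ms, ⟨⟨hen, hms.1⟩, hms.2⟩, by simpa using hrel⟩

end Blockages

section Feasibility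

variable {B S : ℕ}

lemma exists_relocations_getLast?_eq (hS : 2 ≤ S) {b : Fin B} {s₀ : Fin S} {l : List (Fin B)}
    (u : List (Fin B)) {C : Config B S} (hC : C s₀ = l ++ b :: u)
    (hmin : ∀ s, ∀ x ∈ C s, b ≤ x) :
    ∃ ms, AllEnabled C ms ∧ (play C ms s₀).getLast? = some b ∧
      (∀ s, ∀ x ∈ play C ms s, b ≤ x) ∧ numBlocks (play C ms) = numBlocks C := by
  induction u using List.reverseRecOn generalizing C with
  | nil => exact ⟨[], trivial, by simp [play, hC], hmin, rfl⟩
  | append_singleton u t ih =>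
    obtain ⟨s', hs'⟩ : ∃ s', s₀ ≠ s' :=
      have := Fin.nontrivial_iff_two_le.2 hS
      exists_ne s₀ |>.imp fun _ => Ne.symm
    have hC' : C s₀ = (l ++ b :: u) ++ [t] := by simp [hC]
    have htop : (C s₀).getLast? = some t := by rw [hC', List.getLast?_concat]
    have hE : applyMove C (.relocate s₀ s') s₀ = l ++ b :: u := by
      rw [applyMove_relocate_of_getLast? htop, Function.update_of_ne hs', Function.update_self, hC',
        List.dropLast_concat]
    obtain ⟨ms, hen, htop', hmin', hnum⟩ := ih hE fun s x hx =>
      (exists_mem_of_mem_applyMove hx).elim fun s'' hx => hmin s'' x hx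
    exact ⟨.relocate s₀ s' :: ms, ⟨⟨hs', by simp [hC]⟩, hen⟩, htop', hmin',
      hnum.trans (numBlocks_applyMove_relocate hs')⟩

/-- Relocate the blocks above the smallest block away, retrieve it, and repeat. -/
lemma exists_feasible (hS : 2 ≤ S) (C : Config B S) : ∃ ms, Feasible C ms := by
  induction hn : numBlocks C using Nat.strong_induction_on generalizing C with
  | _ n ih =>
  by_cases hempty : ∀ s, C s = []
  · exact ⟨[], trivial, hempty⟩
  push Not at hempty
  obtain ⟨s₁, hs₁⟩ := hempty
  obtain ⟨s₀, b, hb, hmin⟩ := exists_le_all_blocks hs₁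
  obtain ⟨l, u, hC⟩ := List.append_of_mem hb
  obtain ⟨p, hp, htop, hmin', hnum⟩ := exists_relocations_getLast?_eq hS u hC hmin
  have hlt := numBlocks_applyMove_retrieve_lt (List.ne_nil_of_mem (List.mem_of_getLast? htop))
  obtain ⟨q, hq⟩ := ih _ (hn ▸ hnum ▸ hlt) _ rfl
  exact ⟨p ++ .retrieve s₀ :: q,
    (feasible_append _ _ _).2 ⟨hp, ⟨⟨b, htop, hmin'⟩, hq.1⟩, hq.2⟩⟩

lemma exists_partial_plan_of_le_fAll (hS : 2 ≤ S) {C : Config B S} {L : ℕ} (hL : L ≤ fAll C) :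
    ∃ p q, AllEnabled C p ∧ relocCount p = L ∧ Feasible (play C p) q ∧
      L + relocCount q = fAll C := by
  obtain ⟨ms, hms, hopt⟩ := exists_feasible_relocCount_eq_fAll (exists_feasible hS C)
  obtain ⟨p, q, rfl, hp⟩ := exists_append_relocCount_eq ms (hopt ▸ hL)
  obtain ⟨hpe, hq⟩ := (feasible_append C p q).1 hms
  exact ⟨p, q, hpe, hp, hq, by rw [← hp, ← relocCount_append, hopt]⟩

end Feasibility

section IterativeScheme

variable {B S : ℕ}

def partialPlanBlockages (C : Config B S) (L : ℕ) : Set ℕ :=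
  {d | ∃ ms : List (Move S), AllEnabled C ms ∧ relocCount ms = L ∧
    d = directBlockages (play C ms)}

lemma gIter_eq (C : Config B S) (L : ℕ) :
    gIter C L = L + sInf (partialPlanBlockages C L) := rfl

lemma le_gIter (C : Config B S) (L : ℕ) : L ≤ gIter C L := Nat.le_add_right _ _

lemma gIter_le_fAll (hS : 2 ≤ S) {C : Config B S} {L : ℕ} (hL : L ≤ fAll C) :
    gIter C L ≤ fAll C := by
  obtain ⟨p, q, hp, hpL, hq, hsum⟩ := exists_partial_plan_of_le_fAll hS hL
  have hmin : sInf (partialPlanBlockages C L) ≤ directBlockages (play C p) :=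
    Nat.sInf_le ⟨p, hp, hpL, rfl⟩
  have := directBlockages_le_relocCount hq
  rw [gIter_eq]
  omega

lemma lt_gIter_of_lt_fAll (hS : 2 ≤ S) {C : Config B S} {L : ℕ} (hL : L < fAll C) :
    L < gIter C L := by
  obtain ⟨p, -, hp, hpL, -⟩ := exists_partial_plan_of_le_fAll hS hL.le
  obtain ⟨ms, hms, hmsL, hmin⟩ :=
    Nat.sInf_mem (s := partialPlanBlockages C L) ⟨_, p, hp, hpL, rfl⟩
  rw [gIter_eq, hmin]
  by_contra! hzero
  obtain ⟨q, hq, hq₀⟩ := exists_feasible_relocCount_eq_zero_of_directBlockages_eq_zero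
    (play C ms) (by omega)
  have := fAll_le ((feasible_append C ms q).2 ⟨hms, hq⟩)
  rw [relocCount_append] at this
  omega

end IterativeScheme

lemma iterate_eq_of_lt_apply_of_apply_le {g : ℕ → ℕ} {n : ℕ} (hfix : g n = n)
    (hle : ∀ L ≤ n, g L ≤ n) (hlt : ∀ L < n, L < g L) {k L : ℕ} (hL : L ≤ n)
    (hk : n - L ≤ k) : g^[k] L = n := by
  induction k generalizing L with
  | zero => simp only [Function.iterate_zero, id_eq]; omega
  | succ k ih =>
    rw [Function.iterate_succ_apply]
    rcases hL.lt_or_eq with hL | rfl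
    · exact ih (hle L hL.le) (by have := hlt L hL; omega)
    · rw [hfix]; exact ih le_rfl (by omega)

theorem brp_iterative_scheme_general {B S : ℕ} (hS : 2 ≤ S)
    (C : Config B S) :
    (∀ L, L ≤ fAll C → L ≤ gIter C L ∧ gIter C L ≤ fAll C) ∧
    gIter C (fAll C) = fAll C ∧
    (∀ L, L < fAll C → L < gIter C L) ∧
    (∀ L₀, L₀ ≤ fAll C →
      (gIter C)^[fAll C - L₀] L₀ = fAll C ∧
      ∀ i, (gIter C)^[i] L₀ < fAll C → (gIter C)^[i] L₀ < (gIter C)^[i + 1] L₀) := by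
  have hle : ∀ L ≤ fAll C, gIter C L ≤ fAll C := fun _ hL => gIter_le_fAll hS hL
  have hlt : ∀ L < fAll C, L < gIter C L := fun _ hL => lt_gIter_of_lt_fAll hS hL
  have hfix : gIter C (fAll C) = fAll C := (hle _ le_rfl).antisymm (le_gIter C _)
  refine ⟨fun L hL => ⟨le_gIter C L, hle L hL⟩, hfix, hlt,
    fun L₀ hL₀ => ⟨?_, fun i hi => ?_⟩⟩
  · exact iterate_eq_of_lt_apply_of_apply_le hfix hle hlt hL₀ le_rfl
  · rw [Function.iterate_succ_apply']
    exact hlt _ hi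

/-- Theorem 7, convergence of the iterative scheme: with
`opt = f(Fin B)` and `g(L) = L + ` (minimum number of direct blockages over
partial plans with `L` relocations): (i) `L ≤ g(L) ≤ opt` for `L ≤ opt`;
(ii) `g(opt) = opt`; (iii) `g(L) > L` for `L < opt`; consequently, iterating `g`
from any `L₀ ≤ opt` is strictly increasing until reaching `opt`, which it
reaches after at most `opt − L₀` iterations. -/
theorem brp_iterative_scheme {B S : ℕ} (hS : 2 ≤ S) (hB : 1 ≤ B)
    (C : Config B S) (hC : IsConfig C) :
    (∀ L, L ≤ fAll C → L ≤ gIter C L ∧ gIter C L ≤ fAll C) ∧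
    gIter C (fAll C) = fAll C ∧
    (∀ L, L < fAll C → L < gIter C L) ∧
    (∀ L₀, L₀ ≤ fAll C →
      (gIter C)^[fAll C - L₀] L₀ = fAll C ∧
      ∀ i, (gIter C)^[i] L₀ < fAll C → (gIter C)^[i] L₀ < (gIter C)^[i + 1] L₀) :=
  brp_iterative_scheme_general hS C
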